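/- arXiv:1604.04521 — 3 statements merged into one kernel-verified Lean document; each statement's English description precedes it below -/
import Mathlib

section
/- Let 1 < p ≤ 2 and for a, b ∈ ℝ set L(a,b) := |a−b|^{p−2}(a−b) (with L(a,a) := 0). Then for all a, b, a', b' ∈ ℝ one has |L(a,b) − L(a',b')| ≤ 4·|a − a' − b + b'|^{p−1}. -/
/-!
Write `L(a,b) = g(a - b)` with `g(x) = sign x · |x|^s`, `s = p - 1 ∈ (0,1]`. For `x, y` of the same
sign, `|g x - g y| = ||x|^s - |y|^s| ≤ |x - y|^s` by subadditivity of `t ↦ t^s`; for opposite signs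
`|x|, |y| ≤ |x - y|`, so `|g x - g y| = |x|^s + |y|^s ≤ 2 |x - y|^s`.
-/

/-- `L(a,b) = |a-b|^{p-2}(a-b)` (real powers; the convention `L(a,a)=0` holds automatically,
since `0 ^ t = 0` for `t ≠ 0` and the second factor vanishes when `p = 2`). -/
noncomputable def Lf (p a b : ℝ) : ℝ := |a - b| ^ (p - 2) * (a - b)

namespace Real

lemma abs_rpow_sub_rpow_le {s u v : ℝ} (hs0 : 0 ≤ s) (hs1 : s ≤ 1) (hu : 0 ≤ u) (hv : 0 ≤ v) :
    |u ^ s - v ^ s| ≤ |u - v| ^ s := by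
  wlog hvu : v ≤ u generalizing u v
  · rw [abs_sub_comm, abs_sub_comm u]
    exact this hv hu (le_of_not_ge hvu)
  have hsub : u ^ s ≤ (u - v) ^ s + v ^ s := by
    simpa using rpow_add_le_add_rpow (sub_nonneg.2 hvu) hv hs0 hs1
  have hmono : v ^ s ≤ u ^ s := rpow_le_rpow hv hvu hs0
  rw [abs_of_nonneg (sub_nonneg.2 hmono), abs_of_nonneg (sub_nonneg.2 hvu)]
  linarith

end Real

/-- The odd extension `x ↦ sign x · |x|^s` of `t ↦ t^s`. -/
noncomputable def signedRpow (s x : ℝ) : ℝ := |x| ^ (s - 1) * x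

section signedRpow

variable {s : ℝ}

lemma signedRpow_neg (x : ℝ) : signedRpow s (-x) = -signedRpow s x := by
  simp only [signedRpow, abs_neg, mul_neg]

lemma signedRpow_of_nonneg (hs : 0 < s) {x : ℝ} (hx : 0 ≤ x) : signedRpow s x = x ^ s := by
  rcases hx.eq_or_lt with rfl | hx
  · simp [signedRpow, Real.zero_rpow hs.ne']
  · rw [signedRpow, abs_of_pos hx, Real.rpow_sub_one hx.ne', div_mul_cancel₀ _ hx.ne']

lemma abs_signedRpow_sub_le (hs0 : 0 < s) (hs1 : s ≤ 1) (x y : ℝ) :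
    |signedRpow s x - signedRpow s y| ≤ 2 * |x - y| ^ s := by
  wlog hx : 0 ≤ x generalizing x y
  · have h := this (-x) (-y) (by linarith)
    rwa [signedRpow_neg, signedRpow_neg, ← neg_sub', abs_neg, ← neg_sub', abs_neg] at h
  have hpow_nonneg : 0 ≤ |x - y| ^ s := Real.rpow_nonneg (abs_nonneg _) s
  rcases le_total 0 y with hy | hy
  · rw [signedRpow_of_nonneg hs0 hx, signedRpow_of_nonneg hs0 hy]
    linarith [Real.abs_rpow_sub_rpow_le hs0.le hs1 hx hy]
  · have hgy : signedRpow s y = -(-y) ^ s := by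
      rw [← signedRpow_of_nonneg hs0 (neg_nonneg.2 hy), signedRpow_neg, neg_neg]
    have hxy : |x - y| = x - y := abs_of_nonneg (by linarith)
    have hx_le : x ^ s ≤ |x - y| ^ s := Real.rpow_le_rpow hx (by linarith) hs0.le
    have hy_le : (-y) ^ s ≤ |x - y| ^ s := Real.rpow_le_rpow (by linarith) (by linarith) hs0.le
    rw [signedRpow_of_nonneg hs0 hx, hgy, sub_neg_eq_add,
      abs_of_nonneg (add_nonneg (Real.rpow_nonneg hx s) (Real.rpow_nonneg (by linarith) s))]
    linarith

end signedRpow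

lemma Lf_eq_signedRpow (p a b : ℝ) : Lf p a b = signedRpow (p - 1) (a - b) := by
  rw [Lf, signedRpow, sub_sub, one_add_one_eq_two]

/-- Lemma 2.1: for `1 < p ≤ 2`,
`|L(a,b) − L(a',b')| ≤ 4 |a − a' − b + b'|^{p−1}`. -/
theorem lemma_p_le_two (p : ℝ) (hp : 1 < p) (hp2 : p ≤ 2) (a b a' b' : ℝ) :
    |Lf p a b - Lf p a' b'| ≤ 4 * |a - a' - b + b'| ^ (p - 1) := by
  have h := abs_signedRpow_sub_le (by linarith : 0 < p - 1) (by linarith) (a - b) (a' - b')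
  rw [← Lf_eq_signedRpow, ← Lf_eq_signedRpow, show a - b - (a' - b') = a - a' - b + b' by ring] at h
  linarith [Real.rpow_nonneg (abs_nonneg (a - a' - b + b')) (p - 1)]
end

section
/- Let p ≥ 2 and for a, b ∈ ℝ set L(a,b) := |a−b|^{p−2}(a−b). There exists a constant c > 0 depending only on p such that for all a, b, a', b' ∈ ℝ: |L(a,b) − L(a',b)| ≤ c·|a−a'|^{p−1} + c·|a−a'|·|a−b|^{p−2}, and |L(a,b) − L(a,b')| ≤ c·|b−b'|^{p−1} + c·|b−b'|·|a−b|^{p−2}. -/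
open Real Filter Topology Asymptotics

lemma hasDerivAt_abs_rpow_mul_self {q : ℝ} (hq : 0 ≤ q) (t : ℝ) :
    HasDerivAt (fun s : ℝ => |s| ^ q * s) ((q + 1) * |t| ^ q) t := by
  rcases ne_or_eq t 0 with ht | rfl
  · refine (((hasDerivAt_abs ht).rpow_const (p := q) (Or.inl (abs_ne_zero.2 ht))).mul
      (hasDerivAt_id' t)).congr_deriv ?_
    have hsign : (SignType.sign t : ℝ) * t = |t| := by rw [mul_comm, self_mul_sign]
    have hpow : |t| ^ (q - 1) * |t| = |t| ^ q := by
      rw [← rpow_add_one (abs_ne_zero.2 ht), sub_add_cancel]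
    linear_combination q * |t| ^ (q - 1) * hsign + q * hpow
  rcases hq.eq_or_lt with rfl | hq
  · simpa using hasDerivAt_id' (0 : ℝ)
  rw [abs_zero, zero_rpow hq.ne', mul_zero, hasDerivAt_iff_isLittleO_nhds_zero]
  have hsmall : Tendsto (fun s : ℝ => |s| ^ q) (𝓝 0) (𝓝 0) := by
    have := (continuous_abs.rpow_const fun _ => Or.inr hq.le).tendsto (0 : ℝ)
    simpa [zero_rpow hq.ne'] using this
  simpa using (isLittleO_one_iff ℝ |>.2 hsmall).mul_isBigO (isBigO_refl (fun s : ℝ => s) _)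

lemma abs_abs_rpow_mul_self_sub_le {q : ℝ} (hq : 0 ≤ q) (x y : ℝ) :
    |(|x| ^ q * x - |y| ^ q * y)| ≤ (q + 1) * max |x| |y| ^ q * |x - y| := by
  have hderiv_le : ∀ t ∈ Set.uIcc y x, ‖(q + 1) * |t| ^ q‖ ≤ (q + 1) * max |x| |y| ^ q := by
    intro t ht
    have ht' : |t| ≤ max |x| |y| := by
      rcases Set.mem_uIcc.1 ht with ⟨h₁, h₂⟩ | ⟨h₁, h₂⟩
      · exact (abs_le_max_abs_abs h₁ h₂).trans_eq (max_comm _ _)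
      · exact abs_le_max_abs_abs h₁ h₂
    rw [norm_of_nonneg (by positivity)]
    gcongr
  simpa using (convex_uIcc y x).norm_image_sub_le_of_norm_hasDerivWithin_le
    (fun t _ => (hasDerivAt_abs_rpow_mul_self hq t).hasDerivWithinAt) hderiv_le
    Set.left_mem_uIcc Set.right_mem_uIcc

lemma add_rpow_le_two_rpow_mul_rpow_add_rpow_of_nonneg {a b q : ℝ} (ha : 0 ≤ a) (hb : 0 ≤ b)
    (hq : 0 ≤ q) : (a + b) ^ q ≤ 2 ^ q * (a ^ q + b ^ q) := calc
  (a + b) ^ q ≤ (2 * max a b) ^ q := by rw [two_mul]; gcongr <;> simp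
  _ = 2 ^ q * max a b ^ q := mul_rpow zero_le_two (le_max_of_le_left ha)
  _ ≤ 2 ^ q * (a ^ q + b ^ q) := by
    gcongr
    rcases max_choice a b with h | h <;> rw [h] <;> simp [rpow_nonneg, ha, hb]

lemma abs_abs_rpow_mul_self_sub_le_two_rpow {q : ℝ} (hq : 0 ≤ q) (x y : ℝ) :
    |(|x| ^ q * x - |y| ^ q * y)| ≤
      (q + 1) * 2 ^ q * |x - y| ^ (q + 1) + (q + 1) * 2 ^ q * (|x - y| * |x| ^ q) := by
  have hmax : max |x| |y| ≤ |x| + |x - y| :=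
    max_le (le_add_of_nonneg_right (abs_nonneg _))
      (by linarith [abs_sub_abs_le_abs_sub y x, abs_sub_comm x y])
  have hpow : |x - y| ^ (q + 1) = |x - y| ^ q * |x - y| :=
    rpow_add_one' (abs_nonneg _) (by linarith)
  calc |(|x| ^ q * x - |y| ^ q * y)| ≤ (q + 1) * max |x| |y| ^ q * |x - y| :=
        abs_abs_rpow_mul_self_sub_le hq x y
    _ ≤ (q + 1) * (2 ^ q * (|x| ^ q + |x - y| ^ q)) * |x - y| := by
        gcongr
        exact (rpow_le_rpow (by positivity) hmax hq).trans
          (add_rpow_le_two_rpow_mul_rpow_add_rpow_of_nonneg (abs_nonneg _) (abs_nonneg _) hq)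
    _ = _ := by rw [hpow]; ring

/-- Lemma 2.2: for `p ≥ 2` there is `c = c(p) > 0` such that
`|L(a,b) − L(a',b)| ≤ c|a−a'|^{p−1} + c|a−a'||a−b|^{p−2}` and
`|L(a,b) − L(a,b')| ≤ c|b−b'|^{p−1} + c|b−b'||a−b|^{p−2}`. -/
theorem lemma_p_ge_two (p : ℝ) (hp : 2 ≤ p) :
    ∃ c : ℝ, 0 < c ∧ ∀ a b a' b' : ℝ,
      |Lf p a b - Lf p a' b| ≤ c * |a - a'| ^ (p - 1) + c * (|a - a'| * |a - b| ^ (p - 2)) ∧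
      |Lf p a b - Lf p a b'| ≤ c * |b - b'| ^ (p - 1) + c * (|b - b'| * |a - b| ^ (p - 2)) := by
  have hq : 0 ≤ p - 2 := by linarith
  have hexp : p - 2 + 1 = p - 1 := by ring
  have hc : 0 < (p - 1) * 2 ^ (p - 2) := mul_pos (by linarith) (by positivity)
  refine ⟨_, hc, fun a b a' b' => ⟨?_, ?_⟩⟩
  · simpa [Lf, hexp] using abs_abs_rpow_mul_self_sub_le_two_rpow hq (a - b) (a' - b)
  · simpa [Lf, hexp, abs_sub_comm b' b] using
      abs_abs_rpow_mul_self_sub_le_two_rpow hq (a - b) (a - b')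
end

section
/- (Fractional Poincaré inequality under measure density) Let Ω ⊂ ℝ^n be an open bounded set satisfying the measure density condition with constants δ_Ω ∈ (0,1) and r₀ > 0, and let B := B_r(x₀) with x₀ ∈ ∂Ω and r ∈ (0, r₀). Suppose that f ∈ W^{s,p}(B) and f = 0 almost everywhere in B ∖ Ω. Then there exists a constant c ≥ 1 depending only on n, p, s such that ⨍_B |f|^p dx ≤ c·( 1 − (1−δ_Ω)^{1−1/p} )^{−p}·r^{sp}·∫_B ⨍_B |f(x)−f(y)|^p / |x−y|^{n+sp} dx dy, where ⨍ denotes the mean-value integral. -/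
open MeasureTheory Metric Filter
open scoped ENNReal Topology

noncomputable section

/-- `ℝ^n`. -/
abbrev Euc (n : ℕ) := EuclideanSpace ℝ (Fin n)

/-- A symmetric measurable kernel of order `(s,p)` with ellipticity constant `Λ`. -/
def IsKernel (n : ℕ) (s p Λ : ℝ) (K : Euc n → Euc n → ℝ) : Prop :=
  Measurable (Function.uncurry K) ∧
  (∀ x y, K x y = K y x) ∧ (∀ x y, 0 ≤ K x y) ∧
  (∀ᵐ z : Euc n × Euc n, Λ⁻¹ ≤ K z.1 z.2 * ‖z.1 - z.2‖ ^ ((n : ℝ) + s * p) ∧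
    K z.1 z.2 * ‖z.1 - z.2‖ ^ ((n : ℝ) + s * p) ≤ Λ)

/-- Membership in the fractional Sobolev space `W^{s,p}(D)` (finiteness of the norm). -/
def MemW (n : ℕ) (s p : ℝ) (D : Set (Euc n)) (v : Euc n → ℝ) : Prop :=
  AEMeasurable v (volume.restrict D) ∧
  IntegrableOn (fun x => |v x| ^ p) D volume ∧
  Integrable (fun q : Euc n × Euc n => |v q.1 - v q.2| ^ p / ‖q.1 - q.2‖ ^ ((n : ℝ) + s * p))
    ((volume.restrict D).prod (volume.restrict D))

/-- The `W^{s,p}(D)` norm. -/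
noncomputable def sobNorm (n : ℕ) (s p : ℝ) (D : Set (Euc n)) (v : Euc n → ℝ) : ℝ :=
  (∫ x in D, |v x| ^ p) ^ (1/p) +
  (∫ x in D, ∫ y in D, |v x - v y| ^ p / ‖x - y‖ ^ ((n : ℝ) + s * p)) ^ (1/p)

/-- The nonlocal tail `Tail(f; z, r)`. -/
noncomputable def tailF (n : ℕ) (s p : ℝ) (f : Euc n → ℝ) (z : Euc n) (r : ℝ) : ℝ :=
  (r ^ (s * p) * ∫ x in (ball z r)ᶜ, |f x| ^ (p - 1) * ‖x - z‖ ^ (-((n : ℝ) + s * p))) ^ (1/(p-1))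

/-- Membership in the tail space `L^{p-1}_{sp}(ℝ^n)`. -/
def MemTail (n : ℕ) (s p : ℝ) (f : Euc n → ℝ) : Prop :=
  AEMeasurable f volume ∧
  (∀ z : Euc n, ∀ r : ℝ, 0 < r → IntegrableOn (fun x => |f x| ^ (p - 1)) (ball z r) volume) ∧
  (∀ z : Euc n, ∀ r : ℝ, 0 < r →
    IntegrableOn (fun x => |f x| ^ (p - 1) * ‖x - z‖ ^ (-((n : ℝ) + s * p))) (ball z r)ᶜ volume)

/-- The admissible class `K_{g,h}(Ω,Ω')`. -/
def obstacleSet (n : ℕ) (s p : ℝ) (Ω Ω' : Set (Euc n)) (g : Euc n → ℝ) (h : Euc n → EReal) :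
    Set (Euc n → ℝ) :=
  {u | MemW n s p Ω' u ∧ (∀ᵐ x ∂(volume : Measure (Euc n)), x ∈ Ω → h x ≤ (u x : EReal)) ∧
    (∀ᵐ x ∂(volume : Measure (Euc n)), x ∉ Ω → u x = g x)}

/-- The functional `A u (v)`. -/
noncomputable def Aop (n : ℕ) (p : ℝ) (Ω Ω' : Set (Euc n)) (g : Euc n → ℝ)
    (K : Euc n → Euc n → ℝ) (u v : Euc n → ℝ) : ℝ :=
  (∫ x in Ω', ∫ y in Ω', Lf p (u x) (u y) * (v x - v y) * K x y) +
  2 * ∫ y in Ω'ᶜ, ∫ x in Ω, Lf p (u x) (g y) * v x * K x y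

/-- `u` solves the obstacle problem in `K_{g,h}(Ω,Ω')`. -/
def SolvesObstacle (n : ℕ) (s p : ℝ) (Ω Ω' : Set (Euc n)) (g : Euc n → ℝ) (h : Euc n → EReal)
    (K : Euc n → Euc n → ℝ) (u : Euc n → ℝ) : Prop :=
  u ∈ obstacleSet n s p Ω Ω' g h ∧
  ∀ v ∈ obstacleSet n s p Ω Ω' g h, 0 ≤ Aop n p Ω Ω' g K u (fun x => v x - u x)

/-- The essential oscillation of `f` on `A` (in `EReal`). -/
noncomputable def essOsc (n : ℕ) (A : Set (Euc n)) (f : Euc n → ℝ) : EReal :=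
  essSup (fun x => (f x : EReal)) (volume.restrict A) -
    essInf (fun x => (f x : EReal)) (volume.restrict A)

end

/-- The measure density condition on the complement of `Ω`, with constants
`δ_Ω ∈ (0,1)` and `r₀ > 0`. -/
def MeasureDensity (n : ℕ) (Ω : Set (Euc n)) (δ r₀ : ℝ) : Prop :=
  ∀ x₀ ∈ frontier Ω, ∀ r : ℝ, 0 < r → r < r₀ →
    ENNReal.ofReal δ * volume (ball x₀ r) ≤ volume (Ωᶜ ∩ ball x₀ r)

/-!
Let `A = B ∖ Ω`. For `y ∈ A` we have `|f x|^p = |f x - f y|^p`, so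
`|A| ∫_B |f|^p ≤ ∫_A ∫_B |f x - f y|^p ≤ (2r)^(n+sp) ∫_B ∫_B |f x - f y|^p / |x - y|^(n+sp)`,
because `|x - y| < 2r` on `B`. The measure density condition gives `|A| ≥ δ |B| = δ ω r^n` with
`ω` the volume of the unit ball, and `δ⁻¹ ≤ (1 - (1 - δ)^(1 - 1/p))^(-p)`, so
`c = max 1 (2^(n+sp) / ω)` works.
-/

section ZeroSet

variable {α : Type*} [MeasurableSpace α] {μ : Measure α}

theorem measure_mul_setLIntegral_le_of_ae_eq_zero {f : α → ℝ} {A B : Set α} {p : ℝ}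
    (hAB : A ⊆ B) (hA : MeasurableSet A) (hf : ∀ᵐ y ∂μ, y ∈ A → f y = 0) :
    μ A * ∫⁻ x in B, ENNReal.ofReal (|f x| ^ p) ∂μ ≤
      ∫⁻ y in B, ∫⁻ x in B, ENNReal.ofReal (|f x - f y| ^ p) ∂μ ∂μ := by
  have hinner : ∀ᵐ y ∂μ.restrict A, ∫⁻ x in B, ENNReal.ofReal (|f x - f y| ^ p) ∂μ =
      ∫⁻ x in B, ENNReal.ofReal (|f x| ^ p) ∂μ := by
    filter_upwards [ae_restrict_of_ae hf, ae_restrict_mem hA] with y hfy hy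
    simp [hfy hy]
  calc μ A * ∫⁻ x in B, ENNReal.ofReal (|f x| ^ p) ∂μ
      = ∫⁻ y in A, ∫⁻ x in B, ENNReal.ofReal (|f x - f y| ^ p) ∂μ ∂μ := by
        rw [lintegral_congr_ae hinner, setLIntegral_const, mul_comm]
    _ ≤ _ := lintegral_mono' (Measure.restrict_mono hAB le_rfl) le_rfl

theorem ofReal_integral_integral_eq_lintegral_lintegral [SFinite μ] {β : Type*}
    [MeasurableSpace β] {ν : Measure β} [SFinite ν] {F : α → β → ℝ}
    (hF : Integrable (Function.uncurry F) (μ.prod ν)) (hF0 : ∀ x y, 0 ≤ F x y) :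
    ENNReal.ofReal (∫ x, ∫ y, F x y ∂ν ∂μ) = ∫⁻ x, ∫⁻ y, ENNReal.ofReal (F x y) ∂ν ∂μ := by
  rw [integral_integral hF, lintegral_lintegral hF.aemeasurable.ennreal_ofReal]
  exact ofReal_integral_eq_lintegral_ofReal hF (ae_of_all _ fun z => hF0 z.1 z.2)

end ZeroSet

section Ball

variable {E : Type*} [NormedAddCommGroup E]

theorem rpow_abs_sub_le_mul_div_norm_sub_rpow (f : E → ℝ) {x₀ x y : E} {r p q : ℝ} (hp : p ≠ 0)
    (hq : 0 ≤ q) (hx : x ∈ ball x₀ r) (hy : y ∈ ball x₀ r) :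
    |f x - f y| ^ p ≤ (2 * r) ^ q * (|f x - f y| ^ p / ‖x - y‖ ^ q) := by
  rcases eq_or_ne x y with rfl | hxy
  · simp [Real.zero_rpow hp]
  have hxy₀ : 0 < ‖x - y‖ := norm_pos_iff.2 (sub_ne_zero.2 hxy)
  have hxyr : ‖x - y‖ ≤ 2 * r := by
    rw [← dist_eq_norm]
    linarith [dist_triangle_right x y x₀, mem_ball.1 hx, mem_ball.1 hy]
  rw [mul_div_assoc', le_div_iff₀ (by positivity), mul_comm]
  gcongr

theorem addHaar_real_ball_of_pos [NormedSpace ℝ E] [MeasurableSpace E] [BorelSpace E]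
    [FiniteDimensional ℝ E] (μ : Measure E) [μ.IsAddHaarMeasure] (x : E) {r : ℝ} (hr : 0 < r) :
    μ.real (ball x r) = r ^ Module.finrank ℝ E * μ.real (ball 0 1) := by
  rw [measureReal_def, Measure.addHaar_ball_of_pos μ x hr, ENNReal.toReal_mul,
    ENNReal.toReal_ofReal (by positivity), measureReal_def]

variable [MeasurableSpace E] [OpensMeasurableSpace E] {μ : Measure E}

theorem lintegral_ball_rpow_abs_sub_le_mul_lintegral_div (f : E → ℝ) {x₀ : E} {r p q : ℝ}
    (hp : p ≠ 0) (hq : 0 ≤ q) :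
    ∫⁻ y in ball x₀ r, ∫⁻ x in ball x₀ r, ENNReal.ofReal (|f x - f y| ^ p) ∂μ ∂μ ≤
      ENNReal.ofReal ((2 * r) ^ q) *
        ∫⁻ y in ball x₀ r, ∫⁻ x in ball x₀ r,
          ENNReal.ofReal (|f x - f y| ^ p / ‖x - y‖ ^ q) ∂μ ∂μ := by
  rw [← lintegral_const_mul' _ _ ENNReal.ofReal_ne_top]
  refine setLIntegral_mono' measurableSet_ball fun y hy => ?_
  rw [← lintegral_const_mul' _ _ ENNReal.ofReal_ne_top]
  refine setLIntegral_mono' measurableSet_ball fun x hx => ?_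
  rw [← ENNReal.ofReal_mul (Real.rpow_nonneg (by linarith [pos_of_mem_ball hx]) q)]
  exact ENNReal.ofReal_le_ofReal (rpow_abs_sub_le_mul_div_norm_sub_rpow f hp hq hx hy)

theorem measureReal_mul_setIntegral_rpow_le_of_ae_eq_zero [SFinite μ] {f : E → ℝ} {A : Set E}
    {x₀ : E} {r p q : ℝ} (hp : p ≠ 0) (hq : 0 ≤ q) (hA : A ⊆ ball x₀ r) (hAm : MeasurableSet A)
    (hf0 : ∀ᵐ x ∂μ, x ∈ A → f x = 0) (hf : IntegrableOn (fun x => |f x| ^ p) (ball x₀ r) μ)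
    (hg : Integrable (fun z : E × E => |f z.1 - f z.2| ^ p / ‖z.1 - z.2‖ ^ q)
      ((μ.restrict (ball x₀ r)).prod (μ.restrict (ball x₀ r)))) :
    μ.real A * ∫ x in ball x₀ r, |f x| ^ p ∂μ ≤
      (2 * r) ^ q * ∫ y in ball x₀ r, ∫ x in ball x₀ r, |f x - f y| ^ p / ‖x - y‖ ^ q ∂μ ∂μ := by
  obtain hr | hr := le_or_gt r 0
  · simp [ball_eq_empty.2 hr]
  have hlin := (measure_mul_setLIntegral_le_of_ae_eq_zero hA hAm hf0).trans
    (lintegral_ball_rpow_abs_sub_le_mul_lintegral_div (μ := μ) f hp hq)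
  rw [← ofReal_integral_eq_lintegral_ofReal hf (ae_of_all _ fun x => by positivity),
    ← ofReal_integral_integral_eq_lintegral_lintegral
      (F := fun y x => |f x - f y| ^ p / ‖x - y‖ ^ q) hg.swap (fun y x => by positivity),
    ← ENNReal.ofReal_mul (by positivity)] at hlin
  have := ENNReal.toReal_mono ENNReal.ofReal_ne_top hlin
  rwa [ENNReal.toReal_mul, ENNReal.toReal_ofReal (by positivity),
    ENNReal.toReal_ofReal (by positivity)] at this

theorem mul_setIntegral_rpow_le_of_ae_eq_zero [NormedSpace ℝ E] [BorelSpace E]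
    [FiniteDimensional ℝ E] [μ.IsAddHaarMeasure] {f : E → ℝ} {A : Set E} {x₀ : E} {r p q δ : ℝ}
    (hr : 0 < r) (hp : p ≠ 0) (hq : 0 ≤ q) (hA : A ⊆ ball x₀ r) (hAm : MeasurableSet A)
    (hδA : δ * μ.real (ball x₀ r) ≤ μ.real A) (hf0 : ∀ᵐ x ∂μ, x ∈ A → f x = 0)
    (hf : IntegrableOn (fun x => |f x| ^ p) (ball x₀ r) μ)
    (hg : Integrable (fun z : E × E => |f z.1 - f z.2| ^ p / ‖z.1 - z.2‖ ^ q)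
      ((μ.restrict (ball x₀ r)).prod (μ.restrict (ball x₀ r)))) :
    δ * μ.real (ball (0 : E) 1) * ∫ x in ball x₀ r, |f x| ^ p ∂μ ≤
      2 ^ q * r ^ (q - Module.finrank ℝ E) *
        ∫ y in ball x₀ r, ∫ x in ball x₀ r, |f x - f y| ^ p / ‖x - y‖ ^ q ∂μ ∂μ := by
  set d := Module.finrank ℝ E
  have hT : 0 ≤ ∫ x in ball x₀ r, |f x| ^ p ∂μ := integral_nonneg fun x => by positivity
  refine le_of_mul_le_mul_left ?_ (pow_pos hr d)
  calc r ^ d * (δ * μ.real (ball (0 : E) 1) * ∫ x in ball x₀ r, |f x| ^ p ∂μ)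
      = δ * μ.real (ball x₀ r) * ∫ x in ball x₀ r, |f x| ^ p ∂μ := by
        rw [addHaar_real_ball_of_pos μ x₀ hr]; ring
    _ ≤ μ.real A * ∫ x in ball x₀ r, |f x| ^ p ∂μ := by gcongr
    _ ≤ (2 * r) ^ q * ∫ y in ball x₀ r, ∫ x in ball x₀ r, |f x - f y| ^ p / ‖x - y‖ ^ q ∂μ ∂μ :=
        measureReal_mul_setIntegral_rpow_le_of_ae_eq_zero hp hq hA hAm hf0 hf hg
    _ = r ^ d * (2 ^ q * r ^ (q - d) *
          ∫ y in ball x₀ r, ∫ x in ball x₀ r, |f x - f y| ^ p / ‖x - y‖ ^ q ∂μ ∂μ) := by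
        rw [Real.rpow_sub hr, Real.rpow_natCast, Real.mul_rpow zero_le_two hr.le]
        field_simp

end Ball

theorem inv_le_one_sub_one_sub_rpow_rpow_neg {δ p : ℝ} (hδ : δ ∈ Set.Ioo 0 1) (hp : 1 < p) :
    δ⁻¹ ≤ (1 - (1 - δ) ^ (1 - 1 / p)) ^ (-p) := by
  obtain ⟨hδ0, hδ1⟩ := hδ
  have hp' : 0 < 1 / p := by positivity
  have hθ : 0 < 1 - 1 / p := by
    have : 1 / p < 1 := (div_lt_one (by linarith)).2 hp
    linarith
  set D := 1 - (1 - δ) ^ (1 - 1 / p)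
  have hD0 : 0 < D := by
    have := Real.rpow_lt_one (by linarith : 0 ≤ 1 - δ) (by linarith) hθ
    linarith
  have hDδ : D ≤ δ := by
    have := Real.rpow_le_rpow_of_exponent_ge (by linarith : 0 < 1 - δ) (by linarith)
      (by linarith : 1 - 1 / p ≤ 1)
    rw [Real.rpow_one] at this
    linarith
  have hDp : D ^ p ≤ δ := by
    have := Real.rpow_le_rpow_of_exponent_ge hD0 (by linarith) hp.le
    rw [Real.rpow_one] at this
    linarith
  rw [Real.rpow_neg hD0.le]
  exact inv_anti₀ (by positivity) hDp

theorem MeasureDensity.mul_measureReal_ball_le {n : ℕ} {Ω : Set (Euc n)} {δ r₀ : ℝ}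
    (h : MeasureDensity n Ω δ r₀) (hδ : 0 ≤ δ) {x₀ : Euc n} (hx₀ : x₀ ∈ frontier Ω) {r : ℝ}
    (hr : 0 < r) (hrr₀ : r < r₀) :
    δ * volume.real (ball x₀ r) ≤ volume.real (ball x₀ r \ Ω) := by
  have := ENNReal.toReal_mono (measure_lt_top_of_subset Set.sdiff_subset measure_ball_lt_top.ne).ne
    ((h x₀ hx₀ r hr hrr₀).trans_eq (congrArg volume (Set.inter_comm _ _)))
  rwa [ENNReal.toReal_mul, ENNReal.toReal_ofReal hδ] at this


theorem fractional_poincare_density_general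
    (n : ℕ) (s p : ℝ) (hs0 : 0 < s) (hp : 1 < p) :
    ∃ c : ℝ, 1 ≤ c ∧
      ∀ (Ω : Set (Euc n)) (δ r₀ : ℝ), IsOpen Ω → Bornology.IsBounded Ω →
        δ ∈ Set.Ioo (0 : ℝ) 1 → 0 < r₀ → MeasureDensity n Ω δ r₀ →
      ∀ x₀ ∈ frontier Ω, ∀ r ∈ Set.Ioo (0 : ℝ) r₀,
      ∀ f : Euc n → ℝ, MemW n s p (ball x₀ r) f →
        (∀ᵐ x ∂(volume : Measure (Euc n)), x ∈ ball x₀ r \ Ω → f x = 0) →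
        (⨍ x in ball x₀ r, |f x| ^ p)
          ≤ c * (1 - (1 - δ) ^ (1 - 1/p)) ^ (-p) * r ^ (s * p) *
            ∫ y in ball x₀ r, ⨍ x in ball x₀ r, |f x - f y| ^ p / ‖x - y‖ ^ ((n : ℝ) + s * p) := by
  set ω := volume.real (ball (0 : Euc n) 1)
  have hω : 0 < ω := ENNReal.toReal_pos (measure_ball_pos _ _ one_pos).ne' measure_ball_lt_top.ne
  refine ⟨max 1 (2 ^ ((n : ℝ) + s * p) / ω), le_max_left _ _, ?_⟩
  rintro Ω δ r₀ hΩ - hδ - hmd x₀ hx₀ r ⟨hr, hrr₀⟩ f hf hf0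
  have hT := mul_setIntegral_rpow_le_of_ae_eq_zero hr (by positivity) (by positivity)
    Set.sdiff_subset (measurableSet_ball.diff hΩ.measurableSet)
    (hmd.mul_measureReal_ball_le hδ.1.le hx₀ hr hrr₀) hf0 hf.2.1 hf.2.2
  rw [finrank_euclideanSpace_fin, add_sub_cancel_left] at hT
  simp only [setAverage_eq, smul_eq_mul, integral_const_mul]
  set T := ∫ x in ball x₀ r, |f x| ^ p
  set I := ∫ y in ball x₀ r, ∫ x in ball x₀ r, |f x - f y| ^ p / ‖x - y‖ ^ ((n : ℝ) + s * p)
  have hI : 0 ≤ I := integral_nonneg fun y => integral_nonneg fun x => by positivity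
  suffices T ≤ max 1 (2 ^ ((n : ℝ) + s * p) / ω) * (1 - (1 - δ) ^ (1 - 1 / p)) ^ (-p) *
      r ^ (s * p) * I by
    exact (mul_le_mul_of_nonneg_left this (inv_nonneg.2 measureReal_nonneg)).trans_eq (by ring)
  have hδω : 0 < δ * ω := mul_pos hδ.1 hω
  calc T = (δ * ω)⁻¹ * (δ * ω * T) := (inv_mul_cancel_left₀ hδω.ne' T).symm
    _ ≤ (δ * ω)⁻¹ * (2 ^ ((n : ℝ) + s * p) * r ^ (s * p) * I) := by gcongr
    _ = 2 ^ ((n : ℝ) + s * p) / ω * δ⁻¹ * r ^ (s * p) * I := by field_simp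
    _ ≤ _ := by
        gcongr
        · exact inv_nonneg.2 hδ.1.le
        · exact le_max_right _ _
        · exact inv_le_one_sub_one_sub_rpow_rpow_neg hδ hp

/-- Lemma 5.7 (fractional Poincaré inequality under measure density): if `f ∈ W^{s,p}(B)`
with `B = B_r(x₀)`, `x₀ ∈ ∂Ω`, `r < r₀` and `f = 0` a.e. in `B ∖ Ω`, then
`⨍_B |f|^p ≤ c (1 − (1−δ_Ω)^{1−1/p})^{−p} r^{sp} ∫_B ⨍_B |f(x)−f(y)|^p |x−y|^{−n−sp} dx dy`
with `c = c(n,p,s) ≥ 1`. -/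
theorem fractional_poincare_density
    (n : ℕ) (s p : ℝ) (hn : 1 ≤ n) (hs0 : 0 < s) (hs1 : s < 1) (hp : 1 < p) :
    ∃ c : ℝ, 1 ≤ c ∧
      ∀ (Ω : Set (Euc n)) (δ r₀ : ℝ), IsOpen Ω → Bornology.IsBounded Ω →
        δ ∈ Set.Ioo (0 : ℝ) 1 → 0 < r₀ → MeasureDensity n Ω δ r₀ →
      ∀ x₀ ∈ frontier Ω, ∀ r ∈ Set.Ioo (0 : ℝ) r₀,
      ∀ f : Euc n → ℝ, MemW n s p (ball x₀ r) f →
        (∀ᵐ x ∂(volume : Measure (Euc n)), x ∈ ball x₀ r \ Ω → f x = 0) →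
        (⨍ x in ball x₀ r, |f x| ^ p)
          ≤ c * (1 - (1 - δ) ^ (1 - 1/p)) ^ (-p) * r ^ (s * p) *
            ∫ y in ball x₀ r, ⨍ x in ball x₀ r, |f x - f y| ^ p / ‖x - y‖ ^ ((n : ℝ) + s * p) :=
  fractional_poincare_density_general n s p hs0 hp
end
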